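/- arXiv:1004.2603 — 3 statements merged into one kernel-verified Lean document; each statement's English description precedes it below -/
import Mathlib

section
/- Let k be a field and let α, ε, η ∈ k* with ord(ε) = e, ord(η) = h (finite orders), and suppose α^e ∈ ⟨η⟩. Let A = diag(αε, α) and C = ηE₂ (scalar matrix) in GL(2,k). Then the subgroup K = ⟨A, C⟩ of GL(2,k) has order exactly eh. -/
/-!
Diagonal matrices form a copy of `(kˣ)²` inside `GL(2, k)`, in which `A = (αε, α)` and
`C = (η, η)`. The ratio map `(x, y) ↦ x / y` sends `⟨A, C⟩` onto `⟨ε⟩`, of order `e`, and its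
kernel in `⟨A, C⟩` is `⟨C⟩`, of order `h`: an element `AᵐCⁿ` of the kernel has `e ∣ m`, and
`Aᵉ = αᵉ E₂` is a power of `C` because `αᵉ ∈ ⟨η⟩`.
-/

open Matrix

namespace Subgroup

theorem card_map_mul_card_ker_inf {G H : Type*} [Group G] [Group H] (f : G →* H)
    (K : Subgroup G) : Nat.card (K.map f) * Nat.card (f.ker ⊓ K : Subgroup G) = Nat.card K := by
  rw [← relIndex_ker, ← Nat.card_congr (subgroupOfEquivOfLe inf_le_right).toEquiv,
    inf_subgroupOf_right, mul_comm]
  exact card_mul_index _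

variable {G H : Type*} [CommGroup G] [Group H] (ψ : G →* H) {a c : G}

theorem map_closure_pair_of_map_eq_one (hc : ψ c = 1) :
    (closure {a, c}).map ψ = zpowers (ψ a) := by
  rw [MonoidHom.map_closure, Set.image_pair, hc, Set.pair_comm, closure_insert_one,
    zpowers_eq_closure]

theorem ker_inf_closure_pair_eq_zpowers (hc : ψ c = 1) (ha : a ^ orderOf (ψ a) ∈ zpowers c) :
    ψ.ker ⊓ closure {a, c} = zpowers c := by
  refine le_antisymm ?_ (le_inf ?_ ?_)
  · rintro x ⟨hx, hxK⟩
    obtain ⟨m, n, rfl⟩ := mem_closure_pair.mp hxK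
    have hm : (orderOf (ψ a) : ℤ) ∣ m := by
      refine orderOf_dvd_iff_zpow_eq_one.mpr ?_
      simpa [hc] using hx
    obtain ⟨q, rfl⟩ := hm
    rw [_root_.zpow_mul, zpow_natCast]
    exact mul_mem (zpow_mem ha q) (zpow_mem (mem_zpowers c) n)
  · exact zpowers_le.mpr hc
  · exact zpowers_le.mpr (subset_closure (by simp))

theorem card_closure_pair_eq_orderOf_mul_orderOf (hc : ψ c = 1)
    (ha : a ^ orderOf (ψ a) ∈ zpowers c) :
    Nat.card (closure {a, c}) = orderOf (ψ a) * orderOf c := by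
  rw [← card_map_mul_card_ker_inf ψ, map_closure_pair_of_map_eq_one ψ hc,
    ker_inf_closure_pair_eq_zpowers ψ hc ha, Nat.card_zpowers, Nat.card_zpowers]

end Subgroup

namespace Matrix

variable (n R : Type*) [Fintype n] [DecidableEq n] [Semiring R]

def diagonalUnitsHom : (n → Rˣ) →* GL n R :=
  (Units.map (diagonalRingHom n R).toMonoidHom).comp MulEquiv.piUnits.symm.toMonoidHom

variable {n R}

theorem val_diagonalUnitsHom (v : n → Rˣ) :
    (diagonalUnitsHom n R v : Matrix n n R) = diagonal fun i ↦ (v i : R) := rfl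

theorem diagonalUnitsHom_injective : Function.Injective (diagonalUnitsHom n R) := by
  intro v w hvw
  funext i
  ext
  simpa [val_diagonalUnitsHom] using congrArg (fun M : GL n R ↦ (M : Matrix n n R) i i) hvw

end Matrix

theorem order_of_subgroup_generated_by_diag_and_scalar_general
    {k : Type*} [Field k] (α ε η : kˣ) (e h : ℕ)
    (he : orderOf ε = e) (hh : orderOf η = h)
    (hα : α ^ e ∈ Subgroup.zpowers η)
    (A C : GL (Fin 2) k)
    (hA : (A : Matrix (Fin 2) (Fin 2) k) = Matrix.diagonal ![((α * ε : kˣ) : k), (α : k)])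
    (hC : (C : Matrix (Fin 2) (Fin 2) k) = (η : k) • (1 : Matrix (Fin 2) (Fin 2) k)) :
    Nat.card (Subgroup.closure {A, C} : Subgroup (GL (Fin 2) k)) = e * h := by
  set a : Fin 2 → kˣ := ![α * ε, α]
  set c : Fin 2 → kˣ := Pi.constMonoidHom (Fin 2) kˣ η
  let ψ : (Fin 2 → kˣ) →* kˣ := Pi.evalMonoidHom (fun _ ↦ kˣ) 0 / Pi.evalMonoidHom (fun _ ↦ kˣ) 1
  have hAa : A = diagonalUnitsHom (Fin 2) k a := by
    ext : 1
    rw [hA, val_diagonalUnitsHom]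
    congr 1
    funext i
    fin_cases i <;> rfl
  have hCc : C = diagonalUnitsHom (Fin 2) k c := by
    ext : 1
    rw [hC, val_diagonalUnitsHom, smul_one_eq_diagonal]
    rfl
  have hψa : ψ a = ε := by simp [ψ, a]
  have hc : orderOf c = h := by
    rw [orderOf_injective _ (Function.const_injective (β := kˣ)) η, hh]
  have ha : a ^ orderOf (ψ a) ∈ Subgroup.zpowers c := by
    obtain ⟨s, hs⟩ := hα
    refine ⟨s, funext fun i ↦ ?_⟩
    rw [hψa, he]
    fin_cases i <;> simp [a, c, mul_pow, ← he, pow_orderOf_eq_one, hs]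
  rw [hAa, hCc, ← Set.image_pair, ← MonoidHom.map_closure,
    Subgroup.card_map_of_injective diagonalUnitsHom_injective,
    Subgroup.card_closure_pair_eq_orderOf_mul_orderOf ψ (div_self' η) ha, hψa, he, hc]

/-- Let `k` be a field, `α ε η ∈ kˣ` with `ord ε = e`, `ord η = h` (finite,
i.e. positive, orders) and `α^e ∈ ⟨η⟩`.  For `A = diag(αε, α)` and `C = η·E₂` in `GL(2,k)`,
the subgroup `K = ⟨A, C⟩` has order exactly `e·h`. -/
theorem order_of_subgroup_generated_by_diag_and_scalar
    {k : Type*} [Field k] (α ε η : kˣ) (e h : ℕ)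
    (he : orderOf ε = e) (hh : orderOf η = h) (he0 : 0 < e) (hh0 : 0 < h)
    (hα : α ^ e ∈ Subgroup.zpowers η)
    (A C : GL (Fin 2) k)
    (hA : (A : Matrix (Fin 2) (Fin 2) k) = Matrix.diagonal ![((α * ε : kˣ) : k), (α : k)])
    (hC : (C : Matrix (Fin 2) (Fin 2) k) = (η : k) • (1 : Matrix (Fin 2) (Fin 2) k)) :
    Nat.card (Subgroup.closure {A, C} : Subgroup (GL (Fin 2) k)) = e * h :=
  order_of_subgroup_generated_by_diag_and_scalar_general α ε η e h he hh hα A C hA hC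
end

section
/- Every cyclic subgroup of order n ≥ 3 in PGL(3,k), over an algebraically closed field k of characteristic 0, is conjugate to the group generated by the class of diag(1,1,ε), or to the group generated by the class of diag(1,ε^i,ε^j) for some 1 ≤ i < j ≤ n−1 with gcd(i,j,n) = 1, where ε is a primitive n-th root of unity. -/
open Matrix

/-- The projective general linear group `PGL(n,k) = GL(n,k)` modulo its center (the scalar
matrices, for `k` a field). -/
abbrev PGL (n : ℕ) (k : Type*) [Field k] :=
  GL (Fin n) k ⧸ Subgroup.center (GL (Fin n) k)

/-!
A generator `g` of `G` lifts to some `A ∈ GL(3,k)` with `A ^ n = 1`: rescale any lift by an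
`n`-th root of the inverse of the scalar matrix it raises to. As `ε` is a primitive `n`-th root
of unity, `n ≠ 0` in `k`, so `X ^ n - 1` is separable and `A` is diagonalisable, with eigenvalues
`ε ^ aₜ` that may be listed in any order. If two eigenvalues coincide, put them first: up to
scalars `A` becomes `diag(1,1,ε ^ j) = diag(1,1,ε) ^ j`. Otherwise sort the exponents and
subtract the smallest: `A` becomes `diag(1, ε ^ i, ε ^ j)` with `0 < i < j < n`. Because the
class of `A` has order exactly `n`, `gcd(i,j,n) = 1`; in the first case this says that `j` is
prime to `n`, so `diag(1,1,ε) ^ j` and `diag(1,1,ε)` generate the same group.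
-/

theorem Fin.exists_perm_eq_or_strictMono {α : Type*} [LinearOrder α] {m : ℕ}
    (a : Fin (m + 2) → α) :
    ∃ σ : Equiv.Perm (Fin (m + 2)), a (σ 0) = a (σ 1) ∨ StrictMono (a ∘ σ) := by
  by_cases ha : Function.Injective a
  · exact ⟨Tuple.sort a, Or.inr <| (Tuple.monotone_sort a).strictMono_of_injective <|
      ha.comp (Equiv.injective _)⟩
  · obtain ⟨p, q, hpq, hne⟩ : ∃ p q, a p = a q ∧ p ≠ q := by
      simpa [Function.Injective] using ha
    -- a permutation with `0 ↦ p` and `1 ↦ q`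
    refine ⟨Equiv.swap 0 p * Equiv.swap 1 (Equiv.swap 0 p q), Or.inl ?_⟩
    have hq : Equiv.swap 0 p q ≠ 0 := by
      rw [Ne, Equiv.swap_apply_eq_iff, Equiv.swap_apply_left]
      exact hne.symm
    simp [Equiv.swap_apply_of_ne_of_ne Fin.zero_ne_one hq.symm, hpq]

theorem Subgroup.zpowers_pow_eq_of_coprime {G : Type*} [Group G] {x : G} {n j : ℕ}
    (hx : x ^ n = 1) (hj : j.Coprime n) : zpowers (x ^ j) = zpowers x :=
  le_antisymm (zpowers_le.2 (pow_mem (mem_zpowers x) j))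
    (zpowers_le.2 (mem_zpowers_pow_iff.2 (hj.coprime_dvd_right (orderOf_dvd_of_pow_eq_one hx))))

namespace Module.End

variable {K V : Type*} [Field K] [AddCommGroup V] [Module K V]

theorem isSemisimple_of_pow_eq_one {f : End K V} {n : ℕ} (hn : (n : K) ≠ 0) (hf : f ^ n = 1) :
    f.IsSemisimple :=
  isSemisimple_of_squarefree_aeval_eq_zero
    (Polynomial.X_pow_sub_one_separable_iff.2 hn).squarefree (by simp [hf])

theorem IsSemisimple.exists_basis_hasEigenvector [IsAlgClosed K] [FiniteDimensional K V]
    {f : End K V} (hf : f.IsSemisimple) :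
    ∃ (b : Basis (Fin (finrank K V)) K V) (μ : Fin (finrank K V) → K),
      ∀ i, f.HasEigenvector (μ i) (b i) := by
  classical
  have htop : ⨆ μ, f.eigenspace μ = ⊤ := by
    simpa only [hf.isFinitelySemisimple.maxGenEigenspace_eq_eigenspace] using
      f.iSup_maxGenEigenspace_eq_top
  have hint : DirectSum.IsInternal f.eigenspace :=
    DirectSum.isInternal_submodule_of_iSupIndep_of_iSup_eq_top f.eigenspaces_iSupIndep htop
  let B := hint.collectedBasis fun μ ↦ Basis.ofVectorSpace K (f.eigenspace μ)
  let e := B.indexEquiv (finBasis K V)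
  refine ⟨B.reindex e, fun i ↦ (e.symm i).1, fun i ↦ ?_⟩
  rw [B.reindex_apply]
  exact ⟨hint.collectedBasis_mem _ _, B.ne_zero _⟩

end Module.End

namespace Matrix

variable {ι : Type*} [Fintype ι] [DecidableEq ι]

theorem exists_conj_eq_diagonal_of_eigenbasis {R : Type*} [CommRing R] (A : GL ι R)
    (b : Module.Basis ι R (ι → R)) (μ : ι → R)
    (hb : ∀ i, (A : Matrix ι ι R) *ᵥ b i = μ i • b i) :
    ∃ P : GL ι R, ((P⁻¹ * A * P : GL ι R) : Matrix ι ι R) = diagonal μ := by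
  let P := (Pi.basisFun R ι).toMatrix b
  have := (Pi.basisFun R ι).invertibleToMatrix b
  have hAP : (A : Matrix ι ι R) * P = P * diagonal μ := by
    ext r s
    have hbs := congrFun (hb s) r
    simp only [mulVec, dotProduct, Pi.smul_apply, smul_eq_mul] at hbs
    rw [mul_diagonal, Matrix.mul_apply]
    simp [P, Module.Basis.toMatrix_apply, hbs, mul_comm]
  refine ⟨unitOfInvertible P, ?_⟩
  simp [mul_assoc, hAP]

namespace GeneralLinearGroup

variable {K : Type*} [Field K]

theorem scalar_mem_center {R : Type*} [CommRing R] (u : Rˣ) :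
    scalar ι u ∈ Subgroup.center (GL ι R) := by
  rw [center_eq_range_scalar]
  exact ⟨u, rfl⟩

theorem exists_val_eq_diagonal {μ : ι → K} (hμ : ∀ i, μ i ≠ 0) :
    ∃ D : GL ι K, (D : Matrix ι ι K) = diagonal μ :=
  ⟨mkOfDetNeZero (diagonal μ) (by
    rw [det_diagonal]
    exact Finset.prod_ne_zero_iff.2 fun i _ ↦ hμ i), rfl⟩

theorem pow_eq_one_of_val_eq_diagonal {D : GL ι K} {μ : ι → K} {m : ℕ}
    (hD : (D : Matrix ι ι K) = diagonal μ) (hμ : ∀ i, μ i ^ m = 1) : D ^ m = 1 := by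
  ext : 1
  rw [Units.val_pow_eq_pow_val, hD, diagonal_pow, Units.val_one, ← diagonal_one]
  exact congrArg diagonal (funext hμ)

end GeneralLinearGroup

end Matrix

namespace PGL

open Matrix.GeneralLinearGroup (center_eq_range_scalar scalar_mem_center exists_val_eq_diagonal
  pow_eq_one_of_val_eq_diagonal)

variable {m : ℕ} {K : Type*} [Field K]

theorem mk_eq_mk_of_val_eq_smul {D D' : GL (Fin m) K} {c : K} (hc : c ≠ 0)
    (h : (D' : Matrix (Fin m) (Fin m) K) = c • (D : Matrix (Fin m) (Fin m) K)) :
    (D' : PGL m K) = D := by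
  have hD' : D' = D * GeneralLinearGroup.scalar (Fin m) (Units.mk0 c hc) := by
    ext : 1
    simp [h, smul_eq_mul_diagonal]
  rw [hD', QuotientGroup.mk_mul, (QuotientGroup.eq_one_iff _).2 (scalar_mem_center _), mul_one]

theorem exists_mk_eq_and_pow_eq_one [IsAlgClosed K] {n : ℕ} (hn : n ≠ 0) {g : PGL m K}
    (hg : g ^ n = 1) : ∃ A : GL (Fin m) K, (A : PGL m K) = g ∧ A ^ n = 1 := by
  obtain ⟨A, rfl⟩ := QuotientGroup.mk_surjective g
  obtain ⟨u, hu⟩ : A ^ n ∈ (GeneralLinearGroup.scalar (Fin m)).range := by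
    rw [← center_eq_range_scalar, ← QuotientGroup.eq_one_iff, QuotientGroup.mk_pow]
    exact hg
  obtain ⟨c, hc⟩ := IsAlgClosed.exists_pow_nat_eq ((u⁻¹ : Kˣ) : K) (Nat.pos_of_ne_zero hn)
  have hc0 : c ≠ 0 := by
    rintro rfl
    exact (u⁻¹).ne_zero (hc ▸ zero_pow hn)
  let v := Units.mk0 c hc0
  have hv : v ^ n = u⁻¹ := Units.ext (by simp [v, hc])
  refine ⟨A * GeneralLinearGroup.scalar (Fin m) v, ?_, ?_⟩
  · rw [QuotientGroup.mk_mul, (QuotientGroup.eq_one_iff _).2 (scalar_mem_center v), mul_one]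
  · rw [Commute.mul_pow (Subgroup.mem_center_iff.1 (scalar_mem_center v) A), ← hu, ← map_pow,
      hv, ← map_mul, mul_inv_cancel, map_one]

theorem exists_conj_eq_mk_diagonal_of_pow_eq_one [IsAlgClosed K] {n : ℕ} [NeZero n] {ε : K}
    (hε : IsPrimitiveRoot ε n) {g : PGL m K} (hg : g ^ n = 1) :
    ∃ a : Fin m → ℕ, (∀ i, a i < n) ∧ ∀ σ : Equiv.Perm (Fin m),
      ∃ (T : PGL m K) (D : GL (Fin m) K),
        (D : Matrix (Fin m) (Fin m) K) = diagonal (fun i ↦ ε ^ a (σ i)) ∧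
          MulAut.conj T g = D := by
  obtain ⟨A, rfl, hA⟩ := exists_mk_eq_and_pow_eq_one (NeZero.ne n) hg
  have := hε.neZero'
  have hf : toLin' (A : Matrix (Fin m) (Fin m) K) ^ n = 1 := by
    rw [← toLin'_pow, ← Units.val_pow_eq_pow_val, hA, Units.val_one, toLin'_one,
      Module.End.one_eq_id]
  obtain ⟨b, μ, hb⟩ :=
    (Module.End.isSemisimple_of_pow_eq_one (NeZero.ne _) hf).exists_basis_hasEigenvector
  have hμ : ∀ i, μ i ^ n = 1 := fun i ↦ by
    have hbn := (hb i).pow_apply n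
    rw [hf, Module.End.one_apply] at hbn
    exact smul_left_injective K (hb i).2 (hbn.symm.trans (one_smul _ _).symm)
  choose a ha hεa using fun i ↦ hε.eq_pow_of_pow_eq_one (hμ i)
  let e := b.indexEquiv (Pi.basisFun K (Fin m))
  refine ⟨fun i ↦ a (e.symm i), fun i ↦ ha _, fun σ ↦ ?_⟩
  obtain ⟨P, hP⟩ := exists_conj_eq_diagonal_of_eigenbasis A (b.reindex (e.trans σ.symm))
    (fun i ↦ ε ^ a (e.symm (σ i))) fun i ↦ by
      simpa [hεa] using (hb (e.symm (σ i))).apply_eq_smul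
  exact ⟨(P⁻¹ : GL (Fin m) K), P⁻¹ * A * P, hP, by simp⟩

variable {k : Type*} [Field k] {n : ℕ} [NeZero n] {ε : k}

theorem gcd_gcd_eq_one_of_orderOf_mk_diagonal (hε : IsPrimitiveRoot ε n) {i j : ℕ}
    {D : GL (Fin 3) k} (hD : (D : Matrix (Fin 3) (Fin 3) k) = diagonal ![1, ε ^ i, ε ^ j])
    (hord : orderOf (D : PGL 3 k) = n) : Nat.gcd (Nat.gcd i j) n = 1 := by
  set d := Nat.gcd (Nat.gcd i j) n
  have hdn : d ∣ n := Nat.gcd_dvd_right _ _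
  have hroot {l : ℕ} (hl : d ∣ l) : (ε ^ l) ^ (n / d) = 1 := by
    obtain ⟨l, rfl⟩ := hl
    rw [← pow_mul, mul_right_comm, Nat.mul_div_cancel' hdn, pow_mul, hε.pow_eq_one, one_pow]
  have hpow : (D : PGL 3 k) ^ (n / d) = 1 := by
    rw [← QuotientGroup.mk_pow, pow_eq_one_of_val_eq_diagonal hD, QuotientGroup.mk_one]
    intro t
    fin_cases t
    · simp
    · exact hroot ((Nat.gcd_dvd_left _ _).trans (Nat.gcd_dvd_left _ _))
    · exact hroot ((Nat.gcd_dvd_left _ _).trans (Nat.gcd_dvd_right _ _))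
  have hdvd : n ∣ n / d := by simpa only [hord] using orderOf_dvd_of_pow_eq_one hpow
  exact (Nat.div_eq_self.1 (Nat.dvd_antisymm (Nat.div_dvd_of_dvd hdn) hdvd)).resolve_left
    (NeZero.ne n)

theorem exists_zpowers_mk_diagonal_eq_of_exponent_eq (hε : IsPrimitiveRoot ε n)
    {b : Fin 3 → ℕ} (h01 : b 0 = b 1) {D : GL (Fin 3) k}
    (hD : (D : Matrix (Fin 3) (Fin 3) k) = diagonal fun t ↦ ε ^ b t)
    (hord : orderOf (D : PGL 3 k) = n) :
    ∃ D₀ : GL (Fin 3) k, (D₀ : Matrix (Fin 3) (Fin 3) k) = diagonal ![1, 1, ε] ∧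
      Subgroup.zpowers (D : PGL 3 k) = Subgroup.zpowers (D₀ : PGL 3 k) := by
  have hε0 := hε.ne_zero (NeZero.ne n)
  obtain ⟨D₀, hD₀⟩ := exists_val_eq_diagonal (μ := ![1, 1, ε])
    (by simp [Fin.forall_fin_succ, hε0])
  obtain ⟨j, -, hj⟩ := hε.eq_pow_of_pow_eq_one (ξ := ε ^ b 2 / ε ^ b 0) (by
    rw [div_pow, ← pow_mul, ← pow_mul, pow_mul', pow_mul', hε.pow_eq_one, one_pow, one_pow,
      div_one])
  have hD₀j : ((D₀ ^ j : GL (Fin 3) k) : Matrix (Fin 3) (Fin 3) k) =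
      diagonal ![1, ε ^ 0, ε ^ j] := by
    rw [Units.val_pow_eq_pow_val, hD₀, diagonal_pow]
    congr 1
    funext t
    fin_cases t <;> simp
  have hmk : ((D₀ ^ j : GL (Fin 3) k) : PGL 3 k) = D := by
    refine mk_eq_mk_of_val_eq_smul (inv_ne_zero (pow_ne_zero (b 0) hε0)) ?_
    rw [hD₀j, hD, ← diagonal_smul]
    congr 1
    funext t
    fin_cases t <;> simp [h01, hj, div_eq_inv_mul, pow_ne_zero _ hε0]
  have hcop : j.Coprime n := by
    simpa using gcd_gcd_eq_one_of_orderOf_mk_diagonal hε hD₀j (hmk ▸ hord)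
  have hD₀n : (D₀ : PGL 3 k) ^ n = 1 := by
    rw [← QuotientGroup.mk_pow, pow_eq_one_of_val_eq_diagonal hD₀, QuotientGroup.mk_one]
    intro t
    fin_cases t <;> simp [hε.pow_eq_one]
  refine ⟨D₀, hD₀, ?_⟩
  rw [← hmk, QuotientGroup.mk_pow, Subgroup.zpowers_pow_eq_of_coprime hD₀n hcop]

theorem exists_mk_diagonal_eq_of_strictMono_exponents (hε : IsPrimitiveRoot ε n)
    {b : Fin 3 → ℕ} (hb : ∀ t, b t < n) (hmono : StrictMono b) {D : GL (Fin 3) k}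
    (hD : (D : Matrix (Fin 3) (Fin 3) k) = diagonal fun t ↦ ε ^ b t)
    (hord : orderOf (D : PGL 3 k) = n) :
    ∃ i j : ℕ, 1 ≤ i ∧ i < j ∧ j ≤ n - 1 ∧ Nat.gcd (Nat.gcd i j) n = 1 ∧
      ∃ D' : GL (Fin 3) k, (D' : Matrix (Fin 3) (Fin 3) k) = diagonal ![1, ε ^ i, ε ^ j] ∧
        (D' : PGL 3 k) = D := by
  have hε0 := hε.ne_zero (NeZero.ne n)
  have h01 : b 0 < b 1 := hmono (by decide)
  have h12 : b 1 < b 2 := hmono (by decide)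
  have h2 := hb 2
  obtain ⟨D', hD'⟩ := exists_val_eq_diagonal (μ := ![1, ε ^ (b 1 - b 0), ε ^ (b 2 - b 0)])
    (by simp [Fin.forall_fin_succ, hε0])
  have hmk : (D' : PGL 3 k) = D := by
    refine mk_eq_mk_of_val_eq_smul (inv_ne_zero (pow_ne_zero (b 0) hε0)) ?_
    rw [hD', hD, ← diagonal_smul]
    congr 1
    funext t
    fin_cases t <;>
      simp [pow_sub₀, hε0, h01.le, (h01.trans h12).le, pow_ne_zero _ hε0, mul_comm (ε ^ _)]
  exact ⟨b 1 - b 0, b 2 - b 0, by omega, by omega, by omega,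
    gcd_gcd_eq_one_of_orderOf_mk_diagonal hε hD' (hmk ▸ hord), D', hD', hmk⟩

end PGL

theorem cyclic_subgroup_PGL3_conjugate_to_diagonal_general
    {k : Type*} [Field k] [IsAlgClosed k]
    (n : ℕ) (hn : 3 ≤ n) (ε : k) (hε : IsPrimitiveRoot ε n)
    (G : Subgroup (PGL 3 k)) (hGcyc : IsCyclic G) (hGcard : Nat.card G = n) :
    ∃ T : PGL 3 k,
      (∃ D : GL (Fin 3) k, (D : Matrix (Fin 3) (Fin 3) k) = Matrix.diagonal ![1, 1, ε] ∧
        Subgroup.map (MulAut.conj T).toMonoidHom G =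
          Subgroup.zpowers (QuotientGroup.mk D : PGL 3 k)) ∨
      (∃ i j : ℕ, 1 ≤ i ∧ i < j ∧ j ≤ n - 1 ∧ Nat.gcd (Nat.gcd i j) n = 1 ∧
        ∃ D : GL (Fin 3) k,
          (D : Matrix (Fin 3) (Fin 3) k) = Matrix.diagonal ![1, ε ^ i, ε ^ j] ∧
          Subgroup.map (MulAut.conj T).toMonoidHom G =
            Subgroup.zpowers (QuotientGroup.mk D : PGL 3 k)) := by
  have : NeZero n := ⟨by omega⟩
  obtain ⟨g, rfl⟩ := (Subgroup.isCyclic_iff_exists_zpowers_eq_top G).1 hGcyc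
  have hg : orderOf g = n := by rw [← Nat.card_zpowers, hGcard]
  obtain ⟨a, ha, hconj⟩ :=
    PGL.exists_conj_eq_mk_diagonal_of_pow_eq_one hε (hg ▸ pow_orderOf_eq_one g)
  obtain ⟨σ, hσ⟩ := Fin.exists_perm_eq_or_strictMono a
  obtain ⟨T, D, hD, hT⟩ := hconj σ
  have hord : orderOf (D : PGL 3 k) = n := by rw [← hT, MulEquiv.orderOf_eq, hg]
  refine ⟨T, ?_⟩
  rw [MonoidHom.map_zpowers, MulEquiv.coe_toMonoidHom, hT]
  rcases hσ with h01 | hmono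
  · exact Or.inl (PGL.exists_zpowers_mk_diagonal_eq_of_exponent_eq hε h01 hD hord)
  · obtain ⟨i, j, hi, hij, hj, hgcd, D', hD', hmk⟩ :=
      PGL.exists_mk_diagonal_eq_of_strictMono_exponents hε (fun t ↦ ha (σ t)) hmono hD hord
    exact Or.inr ⟨i, j, hi, hij, hj, hgcd, D', hD', by rw [hmk]⟩

/-- over an algebraically closed field `k` of characteristic `0`, every cyclic
subgroup of order `n ≥ 3` of `PGL(3,k)` is conjugate either to the group generated by the
class of `diag(1,1,ε)`, or to the group generated by the class of `diag(1,ε^i,ε^j)` for some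
`1 ≤ i < j ≤ n−1` with `gcd(i,j,n) = 1`, where `ε` is a primitive `n`-th root of unity. -/
theorem cyclic_subgroup_PGL3_conjugate_to_diagonal
    {k : Type*} [Field k] [IsAlgClosed k] [CharZero k]
    (n : ℕ) (hn : 3 ≤ n) (ε : k) (hε : IsPrimitiveRoot ε n)
    (G : Subgroup (PGL 3 k)) (hGcyc : IsCyclic G) (hGcard : Nat.card G = n) :
    ∃ T : PGL 3 k,
      (∃ D : GL (Fin 3) k, (D : Matrix (Fin 3) (Fin 3) k) = Matrix.diagonal ![1, 1, ε] ∧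
        Subgroup.map (MulAut.conj T).toMonoidHom G =
          Subgroup.zpowers (QuotientGroup.mk D : PGL 3 k)) ∨
      (∃ i j : ℕ, 1 ≤ i ∧ i < j ∧ j ≤ n - 1 ∧ Nat.gcd (Nat.gcd i j) n = 1 ∧
        ∃ D : GL (Fin 3) k,
          (D : Matrix (Fin 3) (Fin 3) k) = Matrix.diagonal ![1, ε ^ i, ε ^ j] ∧
          Subgroup.map (MulAut.conj T).toMonoidHom G =
            Subgroup.zpowers (QuotientGroup.mk D : PGL 3 k)) :=
  cyclic_subgroup_PGL3_conjugate_to_diagonal_general n hn ε hε G hGcyc hGcard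
end

section
/- Let f be a homogeneous polynomial in k[x,y,z] of degree n ≥ 2 over an algebraically closed field k of characteristic 0, and suppose f is invariant (up to scalar) under the projectivity (diag(1,1,η)) where η ∈ k* has multiplicative order μ > n. Then the plane curve V(f) is singular. -/
open Matrix MvPolynomial

/-- Substitution action: `(msub B f)(x) = f(B·x)`.  For `A ∈ GL(3,k)`, `f_A := msub A⁻¹ f`. -/
noncomputable def msub {k : Type*} [CommRing k] {n : ℕ}
    (B : Matrix (Fin n) (Fin n) k) (f : MvPolynomial (Fin n) k) : MvPolynomial (Fin n) k :=
  aeval (fun i => ∑ j, MvPolynomial.C (B i j) * MvPolynomial.X j) f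

/-!
Comparing coefficients, `f(x, y, η⁻¹z) = λ f(x, y, z)` forces `η⁻ᵉ = λ` for the exponent `e` of
`z` in every monomial of `f`. These exponents are at most `n < ord η`, so they all equal one `c`,
and `f = z^c g(x, y)`. If `c ≥ 2`, every point of the line `z = 0` is singular; if `c ≤ n - 2`,
the point `(0 : 0 : 1)` is; in the remaining case `n = 2`, `c = 1`, the conic `f = z ℓ(x, y)` is
singular where the lines `z = 0` and `ℓ = 0` meet.
-/

theorem coeff_msub_diagonal {R : Type*} [CommRing R] {N : ℕ} (d : Fin N → R)
    (f : MvPolynomial (Fin N) R) (m : Fin N →₀ ℕ) :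
    coeff m (msub (diagonal d) f) = (∏ i, d i ^ m i) * coeff m f := by
  have hrow : (fun i => ∑ j, C (diagonal d i j) * X j) =
      fun i => C (d i) * (X i : MvPolynomial (Fin N) R) := by
    funext i
    simp [diagonal_apply, apply_ite C, ite_mul]
  rw [msub, hrow]
  induction f using MvPolynomial.induction_on' with
  | monomial m' a =>
    rw [aeval_monomial, coeff_monomial]
    simp only [mul_pow, Finsupp.prod_mul, ← C_pow, ← map_finsuppProd C, algebraMap_eq,
      ← mul_assoc, ← C_mul]
    rw [← monomial_eq, coeff_monomial, Finsupp.prod_pow]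
    split_ifs with h
    · rw [h, mul_comm]
    · rw [mul_zero]
  | add p q hp hq => simp only [map_add, coeff_add, hp, hq, mul_add]

theorem inv_diagonal_mulSingle {R ι : Type*} [CommRing R] [Fintype ι] [DecidableEq ι] (i : ι)
    (u : Rˣ) : (diagonal (Pi.mulSingle i (u : R)))⁻¹ = diagonal (Pi.mulSingle i ↑u⁻¹) := by
  refine inv_eq_left_inv ?_
  rw [diagonal_mul_diagonal, ← Pi.mul_def, ← Pi.mulSingle_mul, ← Units.val_mul, inv_mul_cancel,
    Units.val_one, Pi.mulSingle_one]
  exact diagonal_one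

theorem MvPolynomial.IsHomogeneous.degree_eq_of_mem_support {σ R : Type*} [CommSemiring R]
    {f : MvPolynomial σ R} {n : ℕ} (hf : f.IsHomogeneous n) {m : σ →₀ ℕ} (hm : m ∈ f.support) :
    m.degree = n := by
  rw [Finsupp.degree_eq_weight_one]
  exact hf (mem_support_iff.1 hm)

theorem exists_forall_mem_support_apply_eq_of_msub_eq_smul {k : Type*} [Field k] {N n : ℕ}
    {f : MvPolynomial (Fin N) k} (hf : f.IsHomogeneous n) {i : Fin N} {ζ : k}
    (hζ : n < orderOf ζ) {lam : k} (h : msub (diagonal (Pi.mulSingle i ζ)) f = lam • f) :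
    ∃ c, ∀ m ∈ f.support, m i = c := by
  have hpow (m) (hm : m ∈ f.support) : ζ ^ m i = lam := by
    have hcoeff := congrArg (coeff m) h
    rw [coeff_msub_diagonal, coeff_smul, smul_eq_mul,
      Fintype.prod_eq_single i fun j hj => by simp [hj]] at hcoeff
    simpa using mul_right_cancel₀ (mem_support_iff.1 hm) hcoeff
  have hlt (m) (hm : m ∈ f.support) : m i < orderOf ζ :=
    ((Finsupp.le_degree i m).trans_eq (hf.degree_eq_of_mem_support hm)).trans_lt hζ
  rcases f.support.eq_empty_or_nonempty with hf0 | ⟨m₀, hm₀⟩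
  · exact ⟨0, by simp [hf0]⟩
  · exact ⟨m₀ i, fun m hm =>
      pow_injOn_Iio_orderOf (hlt m hm) (hlt m₀ hm₀) ((hpow m hm).trans (hpow m₀ hm₀).symm)⟩

theorem eval_pderiv_eq_zero_of_forall_mem_support {σ R : Type*} [CommSemiring R]
    {f : MvPolynomial σ R} {x : σ → R} {i : σ}
    (h : ∀ m ∈ f.support, ∃ j, x j = 0 ∧ (m - Finsupp.single i 1 : σ →₀ ℕ) j ≠ 0) :
    eval x (pderiv i f) = 0 := by
  conv_lhs => rw [f.as_sum]
  simp only [map_sum, pderiv_monomial, eval_monomial]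
  refine Finset.sum_eq_zero fun m hm => ?_
  obtain ⟨j, hxj, hmj⟩ := h m hm
  rw [Finsupp.prod, Finset.prod_eq_zero (Finsupp.mem_support_iff.2 hmj)
    (by rw [hxj]; exact zero_pow hmj), mul_zero]

theorem eval_pderiv_eq_zero_of_two_le_sum {σ R : Type*} [CommSemiring R]
    {f : MvPolynomial σ R} {x : σ → R} (i : σ) (s : Finset σ) (hx : ∀ j ∈ s, x j = 0)
    (h : ∀ m ∈ f.support, 2 ≤ ∑ j ∈ s, m j) :
    eval x (pderiv i f) = 0 := by
  classical
  refine eval_pderiv_eq_zero_of_forall_mem_support fun m hm => ?_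
  have hlt : ∑ j ∈ s, Finsupp.single i 1 j < ∑ j ∈ s, m j :=
    calc ∑ j ∈ s, Finsupp.single i 1 j ≤ 1 := by
          simp only [Finsupp.single_apply, Finset.sum_ite_eq]
          split_ifs <;> simp
      _ < ∑ j ∈ s, m j := h m hm
  obtain ⟨j, hj, hij⟩ := Finset.exists_lt_of_sum_lt hlt
  exact ⟨j, hx j hj, by rw [Finsupp.tsub_apply]; omega⟩

theorem exists_ne_zero_forall_eval_eq_zero_of_isHomogeneous_one {σ ι k : Type*} [Fintype σ]
    [Fintype ι] [Field k] {ℓ : ι → MvPolynomial σ k} (hℓ : ∀ j, (ℓ j).IsHomogeneous 1)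
    (hcard : Fintype.card ι < Fintype.card σ) :
    ∃ x : σ → k, x ≠ 0 ∧ ∀ j, eval x (ℓ j) = 0 := by
  have hspan (j : ι) : ∃ c : σ → k, ∑ i, c i • X i = ℓ j := by
    rw [← Submodule.mem_span_range_iff_exists_fun, ← homogeneousSubmodule_one_eq_span_X]
    exact hℓ j
  choose M hM using hspan
  have hker : LinearMap.ker (mulVecLin (of M)) ≠ ⊥ :=
    LinearMap.ker_ne_bot_of_finrank_lt (by simpa using hcard)
  obtain ⟨x, hx, hx0⟩ := (Submodule.ne_bot_iff _).1 hker
  refine ⟨x, hx0, fun j => ?_⟩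
  simpa [← hM, mulVec, dotProduct, smul_eq_C_mul] using congrFun (LinearMap.mem_ker.1 hx) j

def IsSingular {σ R : Type*} [CommSemiring R] (f : MvPolynomial σ R) : Prop :=
  ∃ x : σ → R, x ≠ 0 ∧ ∀ i, eval x (pderiv i f) = 0

theorem isSingular_of_forall_mem_support_apply_two_eq {k : Type*} [Field k] {n c : ℕ}
    {f : MvPolynomial (Fin 3) k} (hn : 2 ≤ n) (hf : f.IsHomogeneous n)
    (hc : ∀ m ∈ f.support, m 2 = c) : IsSingular f := by
  have hxy (m) (hm : m ∈ f.support) : m 0 + m 1 + c = n := by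
    rw [← hc m hm, ← hf.degree_eq_of_mem_support hm, Finsupp.degree_eq_sum, Fin.sum_univ_three]
  rcases (by omega : 2 ≤ c ∨ c + 2 ≤ n ∨ (c = 1 ∧ n = 2)) with hc2 | hcn | ⟨rfl, rfl⟩
  · exact ⟨Pi.single 0 1, by simp, fun i => eval_pderiv_eq_zero_of_two_le_sum i {2} (by simp)
      fun m hm => by rwa [Finset.sum_singleton, hc m hm]⟩
  · refine ⟨Pi.single 2 1, by simp, fun i =>
      eval_pderiv_eq_zero_of_two_le_sum i {0, 1} (by simp) fun m hm => ?_⟩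
    have := hxy m hm
    simp only [Finset.mem_singleton, zero_ne_one, not_false_eq_true, Finset.sum_insert,
      Finset.sum_singleton]
    omega
  · obtain ⟨x, hx0, hx⟩ := exists_ne_zero_forall_eval_eq_zero_of_isHomogeneous_one
      (ℓ := ![pderiv 2 f, X 2]) (Fin.forall_fin_two.2 ⟨hf.pderiv, isHomogeneous_X k 2⟩) (by simp)
    have hx2 : x 2 = 0 := by simpa using hx 1
    have hpderiv_xy (i : Fin 3) (hi : i ≠ 2) : eval x (pderiv i f) = 0 :=
      eval_pderiv_eq_zero_of_forall_mem_support fun m hm => ⟨2, hx2, by simp [hi, hc m hm]⟩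
    refine ⟨x, hx0, fun i => ?_⟩
    fin_cases i
    · exact hpderiv_xy 0 (by decide)
    · exact hpderiv_xy 1 (by decide)
    · simpa using hx 0

theorem singular_of_invariant_under_large_order_diagonal_general
    {k : Type*} [Field k]
    (n μ : ℕ) (hn : 2 ≤ n) (η : kˣ) (hη : orderOf η = μ) (hμ : n < μ)
    (f : MvPolynomial (Fin 3) k) (hhom : f.IsHomogeneous n)
    (D : GL (Fin 3) k)
    (hD : (D : Matrix (Fin 3) (Fin 3) k) = Matrix.diagonal ![1, 1, (η : k)])
    (hinv : ∃ lam : k, lam ≠ 0 ∧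
      msub ((D⁻¹ : GL (Fin 3) k) : Matrix (Fin 3) (Fin 3) k) f = lam • f) :
    ∃ x : Fin 3 → k, x ≠ 0 ∧ ∀ i : Fin 3, eval x (pderiv i f) = 0 := by
  obtain ⟨lam, -, hlam⟩ := hinv
  have hdiag : ![1, 1, (η : k)] = Pi.mulSingle 2 (η : k) := by
    ext j; fin_cases j <;> rfl
  rw [coe_units_inv, hD, hdiag, inv_diagonal_mulSingle] at hlam
  have hord : n < orderOf ((η⁻¹ : kˣ) : k) := by rwa [orderOf_units, orderOf_inv, hη]
  obtain ⟨c, hc⟩ := exists_forall_mem_support_apply_eq_of_msub_eq_smul hhom hord hlam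
  exact isSingular_of_forall_mem_support_apply_two_eq hn hhom hc

/-- let `f ∈ k[x,y,z]` be homogeneous of degree `n ≥ 2` over an algebraically
closed field `k` of characteristic `0`, invariant up to scalar under the projectivity
`(diag(1,1,η))` where `η ∈ k*` has multiplicative order `μ > n`.  Then `V(f)` is singular:
the three partial derivatives of `f` have a common zero `x ≠ 0`. -/
theorem singular_of_invariant_under_large_order_diagonal
    {k : Type*} [Field k] [IsAlgClosed k] [CharZero k]
    (n μ : ℕ) (hn : 2 ≤ n) (η : kˣ) (hη : orderOf η = μ) (hμ : n < μ)
    (f : MvPolynomial (Fin 3) k) (hhom : f.IsHomogeneous n)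
    (D : GL (Fin 3) k)
    (hD : (D : Matrix (Fin 3) (Fin 3) k) = Matrix.diagonal ![1, 1, (η : k)])
    (hinv : ∃ lam : k, lam ≠ 0 ∧
      msub ((D⁻¹ : GL (Fin 3) k) : Matrix (Fin 3) (Fin 3) k) f = lam • f) :
    ∃ x : Fin 3 → k, x ≠ 0 ∧ ∀ i : Fin 3, eval x (pderiv i f) = 0 :=
  singular_of_invariant_under_large_order_diagonal_general n μ hn η hη hμ f hhom D hD hinv
end
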